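/- arXiv:2112.11597 — 7 statements merged into one kernel-verified Lean document; each statement's English description precedes it below -/
import Mathlib

section
/- For every feasible solution S of a TL-RIGHTSIZE instance, cost(S) ≥ cong(𝓤), i.e. cost(S) ≥ max_{1≤t≤T} Σ_{u∈𝓤, u∼t} p*(u). In particular OPT ≥ cong(𝓤). -/
/-!
Charge each task to the node it is assigned to: since p*(u) ≤ p(u | type b), the congestion at
time t is at most the sum, over nodes b, of the penalties p(u | type b) of the tasks on b active
at t. For a single node this sum is cost(b) times the average over dimensions of load/capacity,
and feasibility makes every such ratio at most 1.
-/

open Finset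

theorem sum_comp_eq_sum_fiberwise {ι κ M : Type*} [Fintype κ] [DecidableEq κ] [AddCommMonoid M]
    (s : Finset ι) (g : ι → κ) (f : κ → ι → M) :
    ∑ i ∈ s, f (g i) i = ∑ j, ∑ i ∈ s with g i = j, f j i := by
  rw [← sum_fiberwise s g]
  refine sum_congr rfl fun j _ => sum_congr rfl fun i hi => ?_
  rw [(mem_filter.1 hi).2]

theorem inv_card_mul_sum_le_one {ι : Type*} [Fintype ι] {x : ι → ℝ} (hx : ∀ i, x i ≤ 1) :
    (Fintype.card ι : ℝ)⁻¹ * ∑ i, x i ≤ 1 :=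
  inv_mul_le_one_of_le₀ (by simpa using sum_le_sum fun i (_ : i ∈ univ) => hx i) (by positivity)

theorem sum_penalty_le_cost {U : Type*} {D : ℕ} (A : Finset U) {c : ℝ} (hc : 0 ≤ c)
    {cap : Fin D → ℝ} (hcap : ∀ d, 0 ≤ cap d) (dem : U → Fin D → ℝ)
    (hload : ∀ d, ∑ u ∈ A, dem u d ≤ cap d) :
    ∑ u ∈ A, c * ((D : ℝ)⁻¹ * ∑ d, dem u d / cap d) ≤ c := by
  have hmean : (D : ℝ)⁻¹ * ∑ d, (∑ u ∈ A, dem u d) / cap d ≤ 1 := by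
    simpa using inv_card_mul_sum_le_one fun d => div_le_one_of_le₀ (hload d) (hcap d)
  calc ∑ u ∈ A, c * ((D : ℝ)⁻¹ * ∑ d, dem u d / cap d)
      = c * ((D : ℝ)⁻¹ * ∑ d, (∑ u ∈ A, dem u d) / cap d) := by
        simp only [← mul_sum, sum_div]
        rw [sum_comm]
    _ ≤ c := mul_le_of_le_one_right hc hmean

theorem stmt0_general
    (T D : ℕ) (hT : 1 ≤ T)
    (U Btype Node : Type) [Fintype U] [Fintype Btype] [Nonempty Btype]
    [Fintype Node] [DecidableEq Node]
    (cost : Btype → ℝ) (cap : Btype → Fin D → ℝ)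
    (dem : U → Fin D → ℝ) (s e : U → ℕ)
    (hcost : ∀ B, 0 < cost B)
    (hcap : ∀ B d, 0 < cap B d)
    (ty : Node → Btype) (assign : U → Node)
    (hfeas : ∀ (b : Node) (t : ℕ), t ∈ Finset.Icc 1 T → ∀ d : Fin D,
      ∑ u ∈ Finset.univ.filter (fun u => assign u = b ∧ s u ≤ t ∧ t ≤ e u), dem u d
        ≤ cap (ty b) d) :
    (Finset.Icc 1 T).sup' (Finset.nonempty_Icc.mpr hT)
        (fun t => ∑ u ∈ Finset.univ.filter (fun u => s u ≤ t ∧ t ≤ e u),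
          Finset.univ.inf' Finset.univ_nonempty
            (fun B => cost B * ((D : ℝ)⁻¹ * ∑ d, dem u d / cap B d)))
      ≤ ∑ b : Node, cost (ty b) := by
  refine sup'_le _ _ fun t ht => ?_
  set active : Finset U := univ.filter fun u => s u ≤ t ∧ t ≤ e u
  let penalty (B : Btype) (u : U) : ℝ := cost B * ((D : ℝ)⁻¹ * ∑ d, dem u d / cap B d)
  calc ∑ u ∈ active, univ.inf' univ_nonempty (penalty · u)
      ≤ ∑ u ∈ active, penalty (ty (assign u)) u :=
        sum_le_sum fun u _ => inf'_le _ (mem_univ _)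
    _ = ∑ b, ∑ u ∈ univ.filter (fun u => assign u = b ∧ s u ≤ t ∧ t ≤ e u),
          penalty (ty b) u := by
        rw [sum_comp_eq_sum_fiberwise active assign (fun b => penalty (ty b))]
        simp only [active, filter_filter, and_comm]
    _ ≤ ∑ b, cost (ty b) :=
        sum_le_sum fun b _ => sum_penalty_le_cost _ (hcost _).le (fun d => (hcap _ d).le) dem
          (hfeas b t ht)

theorem stmt0
    (T D : ℕ) (hT : 1 ≤ T) (hD : 0 < D)
    (U Btype Node : Type) [Fintype U] [Fintype Btype] [Nonempty Btype]
    [Fintype Node] [DecidableEq Node]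
    (cost : Btype → ℝ) (cap : Btype → Fin D → ℝ)
    (dem : U → Fin D → ℝ) (s e : U → ℕ)
    (hcost : ∀ B, 0 < cost B)
    (hcap : ∀ B d, 0 < cap B d)
    (hdem : ∀ u d, 0 ≤ dem u d)
    (hspan : ∀ u, 1 ≤ s u ∧ s u ≤ e u ∧ e u ≤ T)
    (ty : Node → Btype) (assign : U → Node)
    (hfeas : ∀ (b : Node) (t : ℕ), t ∈ Finset.Icc 1 T → ∀ d : Fin D,
      ∑ u ∈ Finset.univ.filter (fun u => assign u = b ∧ s u ≤ t ∧ t ≤ e u), dem u d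
        ≤ cap (ty b) d) :
    (Finset.Icc 1 T).sup' (Finset.nonempty_Icc.mpr hT)
        (fun t => ∑ u ∈ Finset.univ.filter (fun u => s u ≤ t ∧ t ≤ e u),
          Finset.univ.inf' Finset.univ_nonempty
            (fun B => cost B * ((D : ℝ)⁻¹ * ∑ d, dem u d / cap B d)))
      ≤ ∑ b : Node, cost (ty b) :=
  stmt0_general T D hT U Btype Node cost cap dem s e hcost hcap ty assign hfeas
end

section
/- Let B be a node-type and let V be a finite set of tasks each of which is small with respect to B (i.e. dem(u,d) ≤ cap(B,d)/2 for all u ∈ V and all dimensions d). Then V can be partitioned into k parts V₁,…,V_k, each part satisfying the capacity constraint of B at every timeslot (for every t and d, Σ_{u∈V_i, u∼t} dem(u,d) ≤ cap(B,d)), where k ≤ 1 + 2D · max_{1≤t≤T} Σ_{u∈V, u∼t} h_avg(u|B). -/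
/-! First fit, placing tasks in order of start time. Write `relSize u = Σ_d dem(u,d)/cap(d)`,
which is `D · h_avg(u|B)`. If a bin rejects the task `a`, it is overloaded at some `t ≥ s(a)` in
some dimension `d`; as `a` is small, the bin's load there exceeds `cap(d)/2`, and as every task
placed before `a` starts no later than `a`, the tasks causing that load are still active at
`s(a)`. So each rejecting bin holds relative size more than `1/2` among the tasks active at
`s(a)`, and if all `k` bins reject `a` then `k/2 < Σ_{u∼s(a)} relSize u ≤ D · max_t Σ_{u∼t} h_avg`.
Hence `k = ⌊2D · max_t Σ_{u∼t} h_avg⌋ + 1` bins suffice. -/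

noncomputable section

namespace FirstFit

open Finset

variable {U ι κ : Type*}
  (cap : ι → ℝ) (dem : U → ι → ℝ) (s e : U → ℕ)

def relSize [Fintype ι] (v : ι → ℝ) : ℝ := ∑ d, v d / cap d

def load [DecidableEq κ] (S : Finset U) (f : U → κ) (c : κ) (t : ℕ) (d : ι) : ℝ :=
  ∑ u ∈ S with f u = c ∧ s u ≤ t ∧ t ≤ e u, dem u d

def Feasible [DecidableEq κ] (S : Finset U) (f : U → κ) : Prop :=
  ∀ c t d, load dem s e S f c t d ≤ cap d

variable {cap dem s e}

lemma relSize_nonneg [Fintype ι] (hcap : ∀ d, 0 < cap d) {v : ι → ℝ} (hv : ∀ d, 0 ≤ v d) :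
    0 ≤ relSize cap v :=
  sum_nonneg fun d _ => div_nonneg (hv d) (hcap d).le

lemma div_le_relSize [Fintype ι] (hcap : ∀ d, 0 < cap d) {v : ι → ℝ} (hv : ∀ d, 0 ≤ v d)
    (d : ι) :
    v d / cap d ≤ relSize cap v :=
  single_le_sum (f := fun d => v d / cap d) (fun d _ => div_nonneg (hv d) (hcap d).le)
    (mem_univ d)

lemma load_insert_update [DecidableEq U] [DecidableEq κ] {S : Finset U} {a : U} (ha : a ∉ S)
    (f : U → κ) (c i : κ) (t : ℕ) (d : ι) :
    load dem s e (insert a S) (Function.update f a c) i t d =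
      load dem s e S f i t d + if c = i ∧ s a ≤ t ∧ t ≤ e a then dem a d else 0 := by
  unfold load
  have hS : ∀ u ∈ S, Function.update f a c u = f u := fun u hu =>
    Function.update_of_ne (ne_of_mem_of_not_mem hu ha) c f
  rw [filter_insert, Function.update_self, filter_congr fun u hu => by rw [hS u hu]]
  split_ifs with h
  · rw [sum_insert (fun h' => ha (mem_filter.1 h').1), add_comm]
  · rw [add_zero]

lemma load_le_load_of_forall_start_le [DecidableEq κ] (hdem : ∀ u d, 0 ≤ dem u d)
    {S : Finset U} {f : U → κ} {c : κ} {t₀ t : ℕ} (hS : ∀ u ∈ S, s u ≤ t₀) (ht : t₀ ≤ t) (d : ι) :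
    load dem s e S f c t d ≤ load dem s e S f c t₀ d := by
  refine sum_le_sum_of_subset_of_nonneg ?_ fun u _ _ => hdem u d
  intro u hu
  simp only [mem_filter] at hu ⊢
  exact ⟨hu.1, hu.2.1, hS u hu.1, ht.trans hu.2.2.2⟩

lemma load_div_le_sum_relSize [Fintype ι] [DecidableEq κ] (hcap : ∀ d, 0 < cap d)
    (hdem : ∀ u d, 0 ≤ dem u d) (S : Finset U) (f : U → κ) (c : κ) (t : ℕ) (d : ι) :
    load dem s e S f c t d / cap d ≤
      ∑ u ∈ S with f u = c ∧ s u ≤ t ∧ t ≤ e u, relSize cap (dem u) := by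
  rw [load, sum_div]
  exact sum_le_sum fun u _ => div_le_relSize hcap (hdem u) d

lemma half_lt_sum_relSize_of_overload [Fintype ι] [DecidableEq κ] (hcap : ∀ d, 0 < cap d)
    (hdem : ∀ u d, 0 ≤ dem u d) (hsmall : ∀ u d, dem u d ≤ cap d / 2) {S : Finset U} {a : U}
    (hS : ∀ u ∈ S, s u ≤ s a) {f : U → κ} {c : κ} {t : ℕ} (ht : s a ≤ t) {d : ι}
    (hover : cap d < load dem s e S f c t d + dem a d) :
    1 / 2 < ∑ u ∈ S with f u = c ∧ s u ≤ s a ∧ s a ≤ e u, relSize cap (dem u) := by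
  have hhalf : cap d / 2 < load dem s e S f c (s a) d :=
    calc cap d / 2 < load dem s e S f c t d := by linarith [hsmall a d]
      _ ≤ load dem s e S f c (s a) d := load_le_load_of_forall_start_le hdem hS ht d
  calc (1 : ℝ) / 2 < load dem s e S f c (s a) d / cap d := by
        rwa [lt_div_iff₀ (hcap d), div_mul_eq_mul_div, one_mul]
    _ ≤ _ := load_div_le_sum_relSize hcap hdem S f c (s a) d

lemma exists_bin_fits [Fintype U] [Fintype ι] [Fintype κ] [Nonempty κ] [DecidableEq κ]
    (hcap : ∀ d, 0 < cap d) (hdem : ∀ u d, 0 ≤ dem u d) (hsmall : ∀ u d, dem u d ≤ cap d / 2)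
    {S : Finset U} {a : U} (hS : ∀ u ∈ S, s u ≤ s a)
    (hk : 2 * ∑ u with s u ≤ s a ∧ s a ≤ e u, relSize cap (dem u) < Fintype.card κ)
    (f : U → κ) :
    ∃ c, ∀ t, s a ≤ t → t ≤ e a → ∀ d, load dem s e S f c t d + dem a d ≤ cap d := by
  by_contra! hblocked
  set A : Finset U := {u ∈ S | s u ≤ s a ∧ s a ≤ e u}
  have hbin (c : κ) : 1 / 2 < ∑ u ∈ A with f u = c, relSize cap (dem u) := by
    obtain ⟨t, ht, -, d, hover⟩ := hblocked c
    rw [filter_filter]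
    simpa only [and_comm] using
      half_lt_sum_relSize_of_overload hcap hdem hsmall hS ht hover
  have hA : ∑ u ∈ A, relSize cap (dem u) ≤
      ∑ u with s u ≤ s a ∧ s a ≤ e u, relSize cap (dem u) :=
    sum_le_sum_of_subset_of_nonneg (filter_subset_filter _ (subset_univ S))
      fun u _ _ => relSize_nonneg hcap (hdem u)
  have hcard : (Fintype.card κ : ℝ) / 2 < ∑ u ∈ A, relSize cap (dem u) :=
    calc (Fintype.card κ : ℝ) / 2 = ∑ _c : κ, (1 / 2 : ℝ) := by
          rw [sum_const, card_univ, nsmul_eq_mul, mul_one_div]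
      _ < ∑ c, ∑ u ∈ A with f u = c, relSize cap (dem u) :=
        sum_lt_sum_of_nonempty univ_nonempty fun c _ => hbin c
      _ = _ := sum_fiberwise _ _ _
  linarith

theorem exists_feasible [Fintype U] [Fintype ι] [Fintype κ] [Nonempty κ] [DecidableEq κ]
    (hcap : ∀ d, 0 < cap d) (hdem : ∀ u d, 0 ≤ dem u d) (hsmall : ∀ u d, dem u d ≤ cap d / 2)
    (hk : ∀ a, 2 * ∑ u with s u ≤ s a ∧ s a ≤ e u, relSize cap (dem u) < Fintype.card κ) :
    ∃ f : U → κ, Feasible cap dem s e univ f := by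
  classical
  induction (univ : Finset U) using induction_on_max_value s with
  | empty => exact ⟨fun _ => Classical.arbitrary κ, fun c t d => by simp [load, (hcap d).le]⟩
  | insert a S ha hS ih =>
    obtain ⟨f, hf⟩ := ih
    obtain ⟨c, hc⟩ := exists_bin_fits hcap hdem hsmall hS (hk a) f
    refine ⟨Function.update f a c, fun i t d => ?_⟩
    rw [load_insert_update ha]
    split_ifs with h
    · obtain ⟨rfl, hst, hte⟩ := h
      exact hc t hst hte d
    · simpa using hf i t d

end FirstFit

end

theorem stmt5
    (T D : ℕ) (hT : 1 ≤ T) (hD : 0 < D)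
    (U : Type) [Fintype U]
    (cap : Fin D → ℝ) (dem : U → Fin D → ℝ) (s e : U → ℕ)
    (hcap : ∀ d, 0 < cap d)
    (hdem : ∀ u d, 0 ≤ dem u d)
    (hspan : ∀ u, 1 ≤ s u ∧ s u ≤ e u ∧ e u ≤ T)
    (hsmall : ∀ (u : U) (d : Fin D), dem u d ≤ cap d / 2) :
    ∃ (k : ℕ) (f : U → Fin k),
      (∀ (i : Fin k) (t : ℕ), t ∈ Finset.Icc 1 T → ∀ d : Fin D,
        ∑ u ∈ Finset.univ.filter (fun u => f u = i ∧ s u ≤ t ∧ t ≤ e u), dem u d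
          ≤ cap d) ∧
      (k : ℝ) ≤ 1 + 2 * D *
        (Finset.Icc 1 T).sup' (Finset.nonempty_Icc.mpr hT)
          (fun t => ∑ u ∈ Finset.univ.filter (fun u => s u ≤ t ∧ t ≤ e u),
            (D : ℝ)⁻¹ * ∑ d, dem u d / cap d) := by
  set M := (Finset.Icc 1 T).sup' (Finset.nonempty_Icc.mpr hT)
    (fun t => ∑ u ∈ Finset.univ.filter (fun u => s u ≤ t ∧ t ≤ e u),
      (D : ℝ)⁻¹ * ∑ d, dem u d / cap d)
  have hM : ∀ t ∈ Finset.Icc 1 T, ∑ u ∈ Finset.univ.filter (fun u => s u ≤ t ∧ t ≤ e u),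
      (D : ℝ)⁻¹ * ∑ d, dem u d / cap d ≤ M := fun t ht =>
      Finset.le_sup' (fun t => ∑ u ∈ Finset.univ.filter (fun u => s u ≤ t ∧ t ≤ e u),
        (D : ℝ)⁻¹ * ∑ d, dem u d / cap d) ht
  have hM₀ : 0 ≤ M := (Finset.sum_nonneg fun u _ => mul_nonneg (by positivity)
    (FirstFit.relSize_nonneg hcap (hdem u))).trans (hM 1 (Finset.mem_Icc.2 ⟨le_rfl, hT⟩))
  set k := ⌊2 * D * M⌋₊ + 1
  obtain ⟨f, hf⟩ := FirstFit.exists_feasible (κ := Fin k) hcap hdem hsmall fun a => by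
    have hD₀ : (D : ℝ) ≠ 0 := Nat.cast_ne_zero.2 hD.ne'
    have hsa : s a ∈ Finset.Icc 1 T :=
      Finset.mem_Icc.2 ⟨(hspan a).1, (hspan a).2.1.trans (hspan a).2.2⟩
    calc 2 * ∑ u with s u ≤ s a ∧ s a ≤ e u, FirstFit.relSize cap (dem u)
        = 2 * D * ∑ u with s u ≤ s a ∧ s a ≤ e u, (D : ℝ)⁻¹ * ∑ d, dem u d / cap d := by
          simp only [mul_assoc, Finset.mul_sum _ _ (D : ℝ), mul_inv_cancel_left₀ hD₀]
          rfl
      _ ≤ 2 * D * M := by gcongr; exact hM _ hsa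
      _ < Fintype.card (Fin k) := by simpa [k] using Nat.lt_floor_add_one (2 * D * M)
  refine ⟨k, f, fun i t _ d => hf i t d, ?_⟩
  have := Nat.floor_le (by positivity : 0 ≤ 2 * D * M)
  push_cast [k]
  linarith
end

section
/- Let B be a node-type, let b be a finite set of tasks, let v be a task each of whose demands satisfies dem(v,d) ≤ cap(B,d)/2, and suppose that for some dimension d̂, dem(v,d̂) + Σ_{u∈b, u∼t₀} dem(u,d̂) ≥ cap(B,d̂) for some timeslot t₀. Then Σ_{u∈b, u∼t₀} h_avg(u|B) ≥ 1/(2D). -/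
/-! The saturated dimension `dhat` is at most half filled by `v`, so the tasks of `b` active at `t₀`
fill at least half of it; their normalised demands in `dhat` alone already sum to `1/2`, and
averaging over the `D` dimensions costs a factor `1/D`. -/

open Finset

lemma one_half_le_sum_div_of_le_add {ι : Type*} (s : Finset ι) {a : ι → ℝ} {c x : ℝ}
    (hc : 0 < c) (hx : x ≤ c / 2) (h : c ≤ x + ∑ i ∈ s, a i) :
    1 / 2 ≤ ∑ i ∈ s, a i / c := by
  rw [← sum_div, le_div_iff₀ hc]
  linarith

theorem stmt6_general
    (D : ℕ)
    (Task : Type) (b : Finset Task)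
    (cap : Fin D → ℝ) (dem : Task → Fin D → ℝ) (s e : Task → ℕ)
    (hcap : ∀ d, 0 < cap d)
    (hdem : ∀ u d, 0 ≤ dem u d)
    (v : Task)
    (hsmall : ∀ d : Fin D, dem v d ≤ cap d / 2)
    (t₀ : ℕ) (dhat : Fin D)
    (hviol : cap dhat ≤
      dem v dhat + ∑ u ∈ b.filter (fun u => s u ≤ t₀ ∧ t₀ ≤ e u), dem u dhat) :
    1 / (2 * (D : ℝ)) ≤
      ∑ u ∈ b.filter (fun u => s u ≤ t₀ ∧ t₀ ≤ e u),
        (D : ℝ)⁻¹ * ∑ d, dem u d / cap d := by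
  set active := b.filter (fun u => s u ≤ t₀ ∧ t₀ ≤ e u)
  have hhalf : 1 / 2 ≤ ∑ u ∈ active, dem u dhat / cap dhat :=
    one_half_le_sum_div_of_le_add active (hcap dhat) (hsmall dhat) hviol
  have hcoord : ∀ u ∈ active, dem u dhat / cap dhat ≤ ∑ d, dem u d / cap d := fun u _ =>
    single_le_sum (f := fun d => dem u d / cap d)
      (fun d _ => div_nonneg (hdem u d) (hcap d).le) (mem_univ dhat)
  calc 1 / (2 * (D : ℝ)) = (D : ℝ)⁻¹ * (1 / 2) := by ring
    _ ≤ (D : ℝ)⁻¹ * ∑ u ∈ active, ∑ d, dem u d / cap d := by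
      gcongr
      exact hhalf.trans (sum_le_sum hcoord)
    _ = ∑ u ∈ active, (D : ℝ)⁻¹ * ∑ d, dem u d / cap d := mul_sum _ _ _

theorem stmt6
    (D : ℕ) (hD : 0 < D)
    (Task : Type) (b : Finset Task)
    (cap : Fin D → ℝ) (dem : Task → Fin D → ℝ) (s e : Task → ℕ)
    (hcap : ∀ d, 0 < cap d)
    (hdem : ∀ u d, 0 ≤ dem u d)
    (v : Task)
    (hsmall : ∀ d : Fin D, dem v d ≤ cap d / 2)
    (t₀ : ℕ) (dhat : Fin D)
    (hviol : cap dhat ≤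
      dem v dhat + ∑ u ∈ b.filter (fun u => s u ≤ t₀ ∧ t₀ ≤ e u), dem u dhat) :
    1 / (2 * (D : ℝ)) ≤
      ∑ u ∈ b.filter (fun u => s u ≤ t₀ ∧ t₀ ≤ e u),
        (D : ℝ)⁻¹ * ∑ d, dem u d / cap d :=
  stmt6_general D Task b cap dem s e hcap hdem v hsmall t₀ dhat hviol
end

section
/- Consider a TL-RIGHTSIZE instance in which every task is small, and let π : 𝓤 → 𝓑 be a penalty-minimizing mapping, i.e. p(u|π(u)) = p*(u) for every task u. Let V_B = {u : π(u) = B}. Then there exists a feasible solution S that places every task u on a node of type π(u) and satisfies cost(S) ≤ Σ_{B∈𝓑} cost(B) + 2D · Σ_{B∈𝓑} cong(V_B). -/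
/-!
Place the tasks of each node-type `B` on nodes of type `B` by first fit, in order of start
time. When a task `u` opens a new node, it did not fit on any of the `k` earlier nodes, so each
of them is overloaded at some timeslot `t ∈ [s u, e u]`; since `u` is small, such a node is more
than half full in some dimension `d`, and since its tasks started no later than `u` they are all
still active at `s u`. For tasks mapped to `B` the penalty `p*` dominates
`cost B / D · dem(·, d) / cap(B, d)`, so each of those `k` nodes carries penalty at least
`cost B / (2D)` at time `s u`, whence `k · cost B / (2D) ≤ cong(V_B)`.
-/

open Finset

section FirstFit

variable {ι κ : Type*} (s e : ι → ℕ) (dem : ι → κ → ℝ) (cap : κ → ℝ)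

def activeAt (A : Finset ι) (t : ℕ) : Finset ι := {v ∈ A | s v ≤ t ∧ t ≤ e v}

def binLoad (A : Finset ι) (f : ι → ℕ) (j t : ℕ) (d : κ) : ℝ :=
  ∑ v ∈ activeAt s e A t with f v = j, dem v d

def FitsIn (A : Finset ι) (f : ι → ℕ) (j : ℕ) (u : ι) : Prop :=
  ∀ t, s u ≤ t → t ≤ e u → ∀ d, binLoad s e dem A f j t d + dem u d ≤ cap d

def Packs (A : Finset ι) (k : ℕ) (f : ι → ℕ) : Prop :=
  (∀ v ∈ A, f v < k) ∧ ∀ j t d, binLoad s e dem A f j t d ≤ cap d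

variable {s e dem cap}

lemma activeAt_mono {A A' : Finset ι} (h : A ⊆ A') (t : ℕ) :
    activeAt s e A t ⊆ activeAt s e A' t :=
  filter_subset_filter _ h

lemma binLoad_eq_zero_of_le {A : Finset ι} {f : ι → ℕ} {k j : ℕ} (hf : ∀ v ∈ A, f v < k)
    (hj : k ≤ j) (t : ℕ) (d : κ) : binLoad s e dem A f j t d = 0 := by
  refine sum_eq_zero fun v hv => ?_
  have hlt := hf v (mem_of_mem_filter v (mem_of_mem_filter v hv))
  have hfv := (mem_filter.1 hv).2
  omega

lemma binLoad_insert_update [DecidableEq ι] {A : Finset ι} {u : ι} (hu : u ∉ A) (f : ι → ℕ)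
    (j j' t : ℕ) (d : κ) :
    binLoad s e dem (insert u A) (Function.update f u j) j' t d =
      binLoad s e dem A f j' t d + if j = j' ∧ s u ≤ t ∧ t ≤ e u then dem u d else 0 := by
  simp only [binLoad, activeAt, filter_filter, sum_filter, sum_insert hu, Function.update_self]
  rw [add_comm]
  congr 1
  · exact sum_congr rfl fun v hv => by rw [Function.update_of_ne (ne_of_mem_of_not_mem hv hu)]
  · exact if_congr (by tauto) rfl rfl

lemma Packs.insert [DecidableEq ι] {A : Finset ι} {k k' j : ℕ} {f : ι → ℕ} {u : ι}
    (h : Packs s e dem cap A k f) (hu : u ∉ A) (hk : k ≤ k') (hj : j < k')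
    (hfit : FitsIn s e dem cap A f j u) :
    Packs s e dem cap (insert u A) k' (Function.update f u j) := by
  refine ⟨fun v hv => ?_, fun j' t d => ?_⟩
  · rcases mem_insert.1 hv with rfl | hv
    · simpa
    · rw [Function.update_of_ne (ne_of_mem_of_not_mem hv hu)]
      exact (h.1 v hv).trans_le hk
  · rw [binLoad_insert_update hu]
    split_ifs with hact
    · obtain ⟨rfl, hst, hte⟩ := hact
      exact hfit t hst hte d
    · simpa using h.2 j' t d

lemma exists_half_lt_binLoad_of_not_fitsIn {A : Finset ι} {f : ι → ℕ} {j : ℕ} {u : ι}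
    (hdem : ∀ v ∈ A, ∀ d, 0 ≤ dem v d) (hmax : ∀ v ∈ A, s v ≤ s u)
    (hsmall : ∀ d, dem u d ≤ cap d / 2) (hfit : ¬ FitsIn s e dem cap A f j u) :
    ∃ d, cap d / 2 < binLoad s e dem A f j (s u) d := by
  simp only [FitsIn, not_forall, not_le] at hfit
  obtain ⟨t, hst, hte, d, hd⟩ := hfit
  refine ⟨d, ?_⟩
  have hmono : binLoad s e dem A f j t d ≤ binLoad s e dem A f j (s u) d := by
    refine sum_le_sum_of_subset_of_nonneg (fun v hv => ?_) fun v hv _ =>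
      hdem v (mem_of_mem_filter v (mem_of_mem_filter v hv)) d
    simp only [activeAt, mem_filter] at hv ⊢
    exact ⟨⟨hv.1.1, hmax v hv.1.1, hst.trans hv.1.2.2⟩, hv.2⟩
  linarith [hsmall d]

lemma div_two_le_sum_of_div_two_le_sum {A : Finset ι} {w : ι → ℝ} {α : ℝ} {d : κ} (hα : 0 ≤ α)
    (hcap : 0 < cap d) (hw : ∀ v ∈ A, α * (dem v d / cap d) ≤ w v)
    (hA : cap d / 2 ≤ ∑ v ∈ A, dem v d) : α / 2 ≤ ∑ v ∈ A, w v :=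
  calc α / 2 = α * (cap d / 2 / cap d) := by field_simp
    _ ≤ α * ((∑ v ∈ A, dem v d) / cap d) := by gcongr
    _ = ∑ v ∈ A, α * (dem v d / cap d) := by rw [sum_div, mul_sum]
    _ ≤ ∑ v ∈ A, w v := sum_le_sum hw

lemma card_mul_le_sum_of_le_sum_fiber {A : Finset ι} {f : ι → ℕ} {k : ℕ} {c : ℝ} {w : ι → ℝ}
    (hf : ∀ v ∈ A, f v < k) (h : ∀ j < k, c ≤ ∑ v ∈ A with f v = j, w v) :
    k * c ≤ ∑ v ∈ A, w v :=
  calc (k : ℝ) * c = ∑ _j ∈ range k, c := by simp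
    _ ≤ ∑ j ∈ range k, ∑ v ∈ A with f v = j, w v := sum_le_sum fun j hj => h j (mem_range.1 hj)
    _ = ∑ v ∈ A, w v := sum_fiberwise_of_maps_to (fun v hv => mem_range.2 (hf v hv)) w

lemma sum_activeAt_le_sum_activeAt {A A' : Finset ι} {w : ι → ℝ} (h : A ⊆ A')
    (hw : ∀ v ∈ A', 0 ≤ w v) (t : ℕ) :
    ∑ v ∈ activeAt s e A t, w v ≤ ∑ v ∈ activeAt s e A' t, w v :=
  sum_le_sum_of_subset_of_nonneg (activeAt_mono h t) fun v hv _ => hw v (mem_of_mem_filter v hv)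

lemma card_mul_half_le_of_not_fitsIn {A : Finset ι} {f : ι → ℕ} {k : ℕ} {u : ι} {α : ℝ}
    {w : ι → ℝ} (hf : ∀ v ∈ A, f v < k) (hcap : ∀ d, 0 < cap d)
    (hdem : ∀ v ∈ A, ∀ d, 0 ≤ dem v d) (hmax : ∀ v ∈ A, s v ≤ s u)
    (hsmall : ∀ d, dem u d ≤ cap d / 2) (hα : 0 ≤ α)
    (hw : ∀ v ∈ A, ∀ d, α * (dem v d / cap d) ≤ w v)
    (hfits : ∀ j < k, ¬ FitsIn s e dem cap A f j u) :
    k * (α / 2) ≤ ∑ v ∈ activeAt s e A (s u), w v := by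
  refine card_mul_le_sum_of_le_sum_fiber (fun v hv => hf v (mem_of_mem_filter v hv))
    fun j hj => ?_
  obtain ⟨d, hd⟩ := exists_half_lt_binLoad_of_not_fitsIn hdem hmax hsmall (hfits j hj)
  exact div_two_le_sum_of_div_two_le_sum hα (hcap d)
    (fun v hv => hw v (mem_of_mem_filter v (mem_of_mem_filter v hv)) d) hd.le

/-- First fit in order of start time. -/
theorem exists_packs_card_mul_le [DecidableEq ι] (V : Finset ι) (hcap : ∀ d, 0 < cap d)
    (hdem : ∀ v ∈ V, ∀ d, 0 ≤ dem v d) (hsmall : ∀ v ∈ V, ∀ d, dem v d ≤ cap d / 2)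
    {α L : ℝ} {w : ι → ℝ} (hα : 0 ≤ α) (hw0 : ∀ v ∈ V, 0 ≤ w v)
    (hw : ∀ v ∈ V, ∀ d, α * (dem v d / cap d) ≤ w v)
    (hL0 : 0 ≤ L) (hL : ∀ u ∈ V, ∑ v ∈ activeAt s e V (s u), w v ≤ L) :
    ∃ k f, Packs s e dem cap V k f ∧ k * α ≤ α + 2 * L := by
  induction V using Finset.strongInduction with
  | H V ih =>
  rcases V.eq_empty_or_nonempty with rfl | hne
  · refine ⟨0, 0, ⟨by simp, fun j t d => ?_⟩, by simp; linarith⟩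
    simpa [binLoad, activeAt] using (hcap d).le
  obtain ⟨u, hu, hmax⟩ := V.exists_max_image s hne
  have hWV : V.erase u ⊆ V := erase_subset u V
  obtain ⟨k, f, hpack, hk⟩ := ih (V.erase u) (erase_ssubset hu)
    (fun v hv => hdem v (hWV hv)) (fun v hv => hsmall v (hWV hv)) (fun v hv => hw0 v (hWV hv))
    (fun v hv => hw v (hWV hv))
    fun v hv => (sum_activeAt_le_sum_activeAt hWV hw0 _).trans (hL v (hWV hv))
  have hu' : u ∉ V.erase u := notMem_erase u V
  rw [← insert_erase hu]
  by_cases hfits : ∃ j < k, FitsIn s e dem cap (V.erase u) f j u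
  · obtain ⟨j, hj, hfit⟩ := hfits
    exact ⟨k, _, hpack.insert hu' le_rfl hj hfit, hk⟩
  refine ⟨k + 1, _, hpack.insert hu' k.le_succ k.lt_succ_self fun t _ _ d => ?_, ?_⟩
  · rw [binLoad_eq_zero_of_le hpack.1 le_rfl, zero_add]
    linarith [hsmall u hu d, hcap d]
  have hkL : k * (α / 2) ≤ L :=
    calc k * (α / 2) ≤ ∑ v ∈ activeAt s e (V.erase u) (s u), w v :=
          card_mul_half_le_of_not_fitsIn hpack.1 hcap (fun v hv => hdem v (hWV hv))
            (fun v hv => hmax v (hWV hv)) (hsmall u hu) hα (fun v hv => hw v (hWV hv))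
            fun j hj hfit => hfits ⟨j, hj, hfit⟩
      _ ≤ ∑ v ∈ activeAt s e V (s u), w v := sum_activeAt_le_sum_activeAt hWV hw0 _
      _ ≤ L := hL u hu
  push_cast
  linarith

end FirstFit

section Penalty

variable {D : ℕ} {U β : Type*} (cost : β → ℝ) (cap : β → Fin D → ℝ) (dem : U → Fin D → ℝ)

noncomputable def penalty (B : β) (u : U) : ℝ := cost B * ((D : ℝ)⁻¹ * ∑ d, dem u d / cap B d)

noncomputable def minPenalty [Fintype β] [Nonempty β] (u : U) : ℝ :=
  univ.inf' univ_nonempty fun B => penalty cost cap dem B u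

variable {cost cap dem}

lemma penalty_nonneg {B : β} {u : U} (hcost : 0 ≤ cost B) (hcap : ∀ d, 0 ≤ cap B d)
    (hdem : ∀ d, 0 ≤ dem u d) : 0 ≤ penalty cost cap dem B u := by
  have := sum_nonneg fun d (_ : d ∈ univ) => div_nonneg (hdem d) (hcap d)
  unfold penalty
  positivity

lemma minPenalty_nonneg [Fintype β] [Nonempty β] {u : U} (hcost : ∀ B, 0 ≤ cost B)
    (hcap : ∀ B d, 0 ≤ cap B d) (hdem : ∀ d, 0 ≤ dem u d) : 0 ≤ minPenalty cost cap dem u :=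
  le_inf' _ _ fun B _ => penalty_nonneg (hcost B) (hcap B) hdem

lemma div_mul_le_penalty {B : β} {u : U} (hcost : 0 ≤ cost B) (hcap : ∀ d, 0 ≤ cap B d)
    (hdem : ∀ d, 0 ≤ dem u d) (d : Fin D) :
    cost B / D * (dem u d / cap B d) ≤ penalty cost cap dem B u := by
  rw [penalty, div_eq_mul_inv, mul_assoc]
  gcongr
  exact single_le_sum (fun d _ => div_nonneg (hdem d) (hcap d)) (mem_univ d)

theorem exists_packs_card_mul_cost_le [Fintype β] [Nonempty β] [DecidableEq U] (s e : U → ℕ)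
    (V : Finset U) (B : β) (hD : 0 < D) (hcost : 0 ≤ cost B) (hcap : ∀ d, 0 < cap B d)
    (hdem : ∀ u ∈ V, ∀ d, 0 ≤ dem u d) (hsmall : ∀ u ∈ V, ∀ d, dem u d ≤ cap B d / 2)
    (hmin : ∀ u ∈ V, penalty cost cap dem B u = minPenalty cost cap dem u) {L : ℝ}
    (hL0 : 0 ≤ L) (hL : ∀ u ∈ V, ∑ v ∈ activeAt s e V (s u), minPenalty cost cap dem v ≤ L) :
    ∃ k f, Packs s e dem (cap B) V k f ∧ k * cost B ≤ cost B + 2 * D * L := by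
  have hD' : (0 : ℝ) < D := by exact_mod_cast hD
  have hcap' : ∀ d, 0 ≤ cap B d := fun d => (hcap d).le
  obtain ⟨k, f, hpack, hk⟩ := exists_packs_card_mul_le V hcap hdem hsmall
    (div_nonneg hcost hD'.le) (fun v hv => hmin v hv ▸ penalty_nonneg hcost hcap' (hdem v hv))
    (fun v hv d => hmin v hv ▸ div_mul_le_penalty hcost hcap' (hdem v hv) d) hL0 hL
  refine ⟨k, f, hpack, ?_⟩
  calc k * cost B = D * (k * (cost B / D)) := by field_simp
    _ ≤ D * (cost B / D + 2 * L) := by gcongr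
    _ = cost B + 2 * D * L := by field_simp

end Penalty

lemma exists_fin_reindex {U β ι : Type*} [Fintype U] [DecidableEq ι] (N : Finset ι)
    (ty : ι → β) (assign : U → ι) (hassign : ∀ u, assign u ∈ N) (P : β → Finset U → Prop)
    (hP : ∀ n ∈ N, P (ty n) {u | assign u = n}) (c : β → ℝ) :
    ∃ (k : ℕ) (ty' : Fin k → β) (assign' : U → Fin k), (∀ u, ty' (assign' u) = ty (assign u)) ∧
      (∀ n, P (ty' n) {u | assign' u = n}) ∧ ∑ n, c (ty' n) = ∑ n ∈ N, c (ty n) := by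
  refine ⟨#N, fun n => ty (N.equivFin.symm n), fun u => N.equivFin ⟨assign u, hassign u⟩,
    fun u => by simp, fun n => ?_, ?_⟩
  · convert hP _ (N.equivFin.symm n).2 using 2
    simp [← Equiv.eq_symm_apply, Subtype.ext_iff]
  · rw [Equiv.sum_comp N.equivFin.symm fun n => c (ty n)]
    exact sum_coe_sort N fun n => c (ty n)

lemma sum_filter_sigma_eq_binLoad {U β κ : Type*} [Fintype U] [DecidableEq β] (s e : U → ℕ)
    (dem : U → κ → ℝ) (π : U → β) (f : β → U → ℕ) (B : β) (j t : ℕ) (d : κ) :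
    ∑ u ∈ univ.filter (fun u => (⟨π u, f (π u) u⟩ : Σ _ : β, ℕ) = ⟨B, j⟩)
      with s u ≤ t ∧ t ≤ e u, dem u d = binLoad s e dem {u | π u = B} (f B) j t d := by
  rw [binLoad]
  refine sum_congr ?_ fun _ _ => rfl
  ext u
  simp only [activeAt, mem_filter, mem_univ, true_and, Sigma.mk.injEq, heq_eq_eq]
  constructor
  · rintro ⟨⟨rfl, rfl⟩, hact⟩
    exact ⟨⟨rfl, hact⟩, rfl⟩
  · rintro ⟨⟨rfl, hact⟩, rfl⟩
    exact ⟨⟨rfl, rfl⟩, hact⟩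

theorem stmt7
    (T D : ℕ) (hT : 1 ≤ T) (hD : 0 < D)
    (U Btype : Type) [Fintype U] [Fintype Btype] [Nonempty Btype] [DecidableEq Btype]
    (cost : Btype → ℝ) (cap : Btype → Fin D → ℝ)
    (dem : U → Fin D → ℝ) (s e : U → ℕ)
    (hcost : ∀ B, 0 < cost B)
    (hcap : ∀ B d, 0 < cap B d)
    (hdem : ∀ u d, 0 ≤ dem u d)
    (hspan : ∀ u, 1 ≤ s u ∧ s u ≤ e u ∧ e u ≤ T)
    (hsmall : ∀ u B d, dem u d ≤ cap B d / 2)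
    (π : U → Btype)
    (hπ : ∀ u, cost (π u) * ((D : ℝ)⁻¹ * ∑ d, dem u d / cap (π u) d)
        = Finset.univ.inf' Finset.univ_nonempty
            (fun B => cost B * ((D : ℝ)⁻¹ * ∑ d, dem u d / cap B d))) :
    ∃ (k : ℕ) (ty : Fin k → Btype) (assign : U → Fin k),
      (∀ u, ty (assign u) = π u) ∧
      (∀ (bn : Fin k) (t : ℕ), t ∈ Finset.Icc 1 T → ∀ d : Fin D,
        ∑ u ∈ Finset.univ.filter (fun u => assign u = bn ∧ s u ≤ t ∧ t ≤ e u), dem u d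
          ≤ cap (ty bn) d) ∧
      ∑ bn : Fin k, cost (ty bn)
        ≤ (∑ B : Btype, cost B) + 2 * D *
          ∑ B : Btype, (Finset.Icc 1 T).sup' (Finset.nonempty_Icc.mpr hT)
            (fun t => ∑ u ∈ Finset.univ.filter (fun u => π u = B ∧ s u ≤ t ∧ t ≤ e u),
              Finset.univ.inf' Finset.univ_nonempty
                (fun B' => cost B' * ((D : ℝ)⁻¹ * ∑ d, dem u d / cap B' d))) := by
  classical
  have hpack : ∀ B, ∃ k f, Packs s e dem (cap B) {u | π u = B} k f ∧
      k * cost B ≤ cost B + 2 * D * (Icc 1 T).sup' (nonempty_Icc.mpr hT) fun t =>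
        ∑ u with π u = B ∧ s u ≤ t ∧ t ≤ e u, minPenalty cost cap dem u := by
    intro B
    refine exists_packs_card_mul_cost_le s e _ B hD (hcost B).le (hcap B) (fun u _ => hdem u)
      (fun u _ => hsmall u B) (fun u hu => ?_) ?_ fun u _ => ?_
    · obtain rfl := (mem_filter.1 hu).2
      exact hπ u
    · exact le_sup'_of_le _ (left_mem_Icc.2 hT) <| sum_nonneg fun u _ =>
        minPenalty_nonneg (fun B => (hcost B).le) (fun B d => (hcap B d).le) (hdem u)
    · rw [activeAt, filter_filter]
      exact le_sup'_of_le _ (mem_Icc.2 ⟨(hspan u).1, (hspan u).2.1.trans (hspan u).2.2⟩) le_rfl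
  choose k f hpack hk using hpack
  obtain ⟨n, ty, assign, hty, hload, hsum⟩ := exists_fin_reindex (univ.sigma fun B => range (k B))
    Sigma.fst (fun u => (⟨π u, f (π u) u⟩ : Σ _ : Btype, ℕ))
    (fun u => mem_sigma.2 ⟨mem_univ _, mem_range.2 ((hpack (π u)).1 u (by simp))⟩)
    (fun B A => ∀ t ∈ Icc 1 T, ∀ d, ∑ u ∈ A with s u ≤ t ∧ t ≤ e u, dem u d ≤ cap B d)
    (fun ⟨B, j⟩ _ t _ d => (sum_filter_sigma_eq_binLoad s e dem π f B j t d).trans_le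
      ((hpack B).2 j t d)) cost
  refine ⟨n, ty, assign, hty, fun bn t ht d => by simpa [filter_filter] using hload bn t ht d, ?_⟩
  calc ∑ bn, cost (ty bn) = ∑ B, k B * cost B := by simp [hsum, sum_sigma]
    _ ≤ _ := (sum_le_sum fun B _ => hk B).trans_eq (by rw [sum_add_distrib, mul_sum]; rfl)
end

section
/- For a TL-RIGHTSIZE instance, define LB(π) = Σ_{B∈𝓑} cost(B) · max_{1≤t≤T, 1≤d≤D} Σ_{u : π(u)=B, u∼t} dem(u,d)/cap(B,d) for each mapping π : 𝓤 → 𝓑. Then OPT ≥ min_{π : 𝓤 → 𝓑} LB(π). -/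
/-- `FeasCost T D U Btype cost cap dem s e c` holds iff there is a feasible solution of
the TL-RIGHTSIZE instance of total cost `c`. -/
def FeasCost (T D : ℕ) (U Btype : Type) [Fintype U] [Fintype Btype]
    (cost : Btype → ℝ) (cap : Btype → Fin D → ℝ)
    (dem : U → Fin D → ℝ) (s e : U → ℕ) (c : ℝ) : Prop :=
  ∃ (k : ℕ) (ty : Fin k → Btype) (assign : U → Fin k),
    (∀ (bn : Fin k) (t : ℕ), t ∈ Finset.Icc 1 T → ∀ d : Fin D,
      ∑ u ∈ Finset.univ.filter (fun u => assign u = bn ∧ s u ≤ t ∧ t ≤ e u), dem u d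
        ≤ cap (ty bn) d) ∧
    c = ∑ bn : Fin k, cost (ty bn)

/-!
A feasible solution with node types `ty` and assignment `assign` induces the mapping
`π = ty ∘ assign`. For a node-type `B`, a timeslot and a dimension, the normalized load of the
tasks sent to `B` splits over the nodes of type `B`, and each node contributes at most `1` by
feasibility; so the maximal normalized load of `B` is at most the number of purchased nodes of
type `B`, and `LB(π)` is at most the cost of the solution.
-/

open Finset

lemma sum_le_card_mul_of_sum_fiber_le {ι κ : Type*} [DecidableEq κ] {s : Finset ι}
    {t : Finset κ} {f : ι → κ} (hf : ∀ i ∈ s, f i ∈ t) (g : ι → ℝ) {c : ℝ}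
    (hfiber : ∀ j ∈ t, ∑ i ∈ s with f i = j, g i ≤ c) :
    ∑ i ∈ s, g i ≤ #t * c := by
  rw [← sum_fiberwise_of_maps_to hf, ← nsmul_eq_mul]
  exact sum_le_card_nsmul t _ c hfiber

lemma normalizedLoad_le_card_of_feasible {T D : ℕ} {U Btype : Type} [Fintype U]
    [DecidableEq Btype] {cap : Btype → Fin D → ℝ} {dem : U → Fin D → ℝ} {s e : U → ℕ}
    {k : ℕ} {ty : Fin k → Btype} {assign : U → Fin k}
    (hfeas : ∀ (bn : Fin k) (t : ℕ), t ∈ Icc 1 T → ∀ d : Fin D,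
      ∑ u ∈ univ.filter (fun u => assign u = bn ∧ s u ≤ t ∧ t ≤ e u), dem u d
        ≤ cap (ty bn) d)
    {B : Btype} {t : ℕ} {d : Fin D} (hcap : 0 < cap B d) (ht : t ∈ Icc 1 T) :
    ∑ u ∈ univ.filter (fun u => ty (assign u) = B ∧ s u ≤ t ∧ t ≤ e u), dem u d / cap B d
      ≤ #{bn | ty bn = B} := by
  rw [← sum_div, div_le_iff₀ hcap]
  refine sum_le_card_mul_of_sum_fiber_le (f := assign) (by simp_all) _ fun bn hbn => ?_
  rw [mem_filter] at hbn
  have hfiber : {u ∈ univ.filter (fun u => ty (assign u) = B ∧ s u ≤ t ∧ t ≤ e u) |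
      assign u = bn} = univ.filter (fun u => assign u = bn ∧ s u ≤ t ∧ t ≤ e u) := by
    ext u
    simp only [mem_filter, mem_univ, true_and]
    constructor
    · rintro ⟨⟨-, hs, he⟩, rfl⟩
      exact ⟨rfl, hs, he⟩
    · rintro ⟨rfl, hs, he⟩
      exact ⟨⟨hbn.2, hs, he⟩, rfl⟩
  rw [hfiber, ← hbn.2]
  exact hfeas bn t ht d

theorem stmt13_general
    (T D : ℕ) (hT : 1 ≤ T) (hD : 0 < D)
    (U Btype : Type) [Fintype U] [DecidableEq U] [Fintype Btype] [Nonempty Btype]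
    [DecidableEq Btype]
    (cost : Btype → ℝ) (cap : Btype → Fin D → ℝ)
    (dem : U → Fin D → ℝ) (s e : U → ℕ)
    (hcost : ∀ B, 0 < cost B)
    (hcap : ∀ B d, 0 < cap B d)
    (hex : ∃ c, FeasCost T D U Btype cost cap dem s e c) :
    (Finset.univ : Finset (U → Btype)).inf' Finset.univ_nonempty
        (fun π => ∑ B : Btype, cost B *
          ((Finset.Icc 1 T) ×ˢ (Finset.univ : Finset (Fin D))).sup'
            ((Finset.nonempty_Icc.mpr hT).product ⟨⟨0, hD⟩, Finset.mem_univ _⟩)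
            (fun td => ∑ u ∈ Finset.univ.filter
                (fun u => π u = B ∧ s u ≤ td.1 ∧ td.1 ≤ e u),
              dem u td.2 / cap B td.2))
      ≤ sInf {c : ℝ | FeasCost T D U Btype cost cap dem s e c} := by
  refine le_csInf hex ?_
  rintro _ ⟨k, ty, assign, hfeas, rfl⟩
  refine (inf'_le _ (mem_univ (ty ∘ assign))).trans ?_
  rw [← sum_fiberwise' univ ty cost]
  refine sum_le_sum fun B _ => ?_
  rw [sum_const, nsmul_eq_mul, mul_comm]
  refine mul_le_mul_of_nonneg_right (sup'_le _ _ fun td htd => ?_) (hcost B).le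
  exact normalizedLoad_le_card_of_feasible hfeas (hcap B td.2) (mem_product.mp htd).1

theorem stmt13
    (T D : ℕ) (hT : 1 ≤ T) (hD : 0 < D)
    (U Btype : Type) [Fintype U] [DecidableEq U] [Fintype Btype] [Nonempty Btype]
    [DecidableEq Btype]
    (cost : Btype → ℝ) (cap : Btype → Fin D → ℝ)
    (dem : U → Fin D → ℝ) (s e : U → ℕ)
    (hcost : ∀ B, 0 < cost B)
    (hcap : ∀ B d, 0 < cap B d)
    (hdem : ∀ u d, 0 ≤ dem u d)
    (hspan : ∀ u, 1 ≤ s u ∧ s u ≤ e u ∧ e u ≤ T)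
    (hex : ∃ c, FeasCost T D U Btype cost cap dem s e c) :
    (Finset.univ : Finset (U → Btype)).inf' Finset.univ_nonempty
        (fun π => ∑ B : Btype, cost B *
          ((Finset.Icc 1 T) ×ˢ (Finset.univ : Finset (Fin D))).sup'
            ((Finset.nonempty_Icc.mpr hT).product ⟨⟨0, hD⟩, Finset.mem_univ _⟩)
            (fun td => ∑ u ∈ Finset.univ.filter
                (fun u => π u = B ∧ s u ≤ td.1 ∧ td.1 ≤ e u),
              dem u td.2 / cap B td.2))
      ≤ sInf {c : ℝ | FeasCost T D U Btype cost cap dem s e c} :=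
  stmt13_general T D hT hD U Btype cost cap dem s e hcost hcap hex
end

section
/- Let P ⊆ ℝ^{𝓤×𝓑} × ℝ^{𝓑} be the polytope of points (x, α) satisfying: Σ_{B∈𝓑} x(u,B) = 1 for every task u; Σ_{u∼t} x(u,B)·dem(u,d)/cap(B,d) ≤ α_B for every node-type B, timeslot t, and dimension d; and 0 ≤ x(u,B) ≤ 1 for every task u and node-type B. Then for any extreme point (x*, α*) of P, the number of pairs (u,B) with x*(u,B) strictly between 0 and 1 is at most n + m·T·D. -/
/-!
At an extreme point `(x, α)`, let `F` be the set of pairs `(u, B)` with `0 < x u B < 1`.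
A direction `z` supported on `F` that keeps every assignment sum and every load
`∑_{u∼t} z(u,B)·dem(u,d)/cap(B,d)` equal to zero can be added to `x` with a small
coefficient of either sign without leaving the polytope, with `α` unchanged; extremality
forces `z = 0`.
So the linear map sending such a `z` to these `n + m·T·D` values is injective on `ℝ^F`,
whence `|F| ≤ n + m·T·D`.
-/

open Finset Filter Topology

theorem eq_zero_of_add_mem_of_sub_mem_of_mem_extremePoints {𝕜 E : Type*} [Ring 𝕜]
    [LinearOrder 𝕜] [IsStrictOrderedRing 𝕜] [Invertible (2 : 𝕜)] [AddCommGroup E] [Module 𝕜 E]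
    {A : Set E} {x v : E} (hx : x ∈ A.extremePoints 𝕜) (hadd : x + v ∈ A) (hsub : x - v ∈ A) :
    v = 0 := by
  have := (mem_extremePoints.1 hx).2 _ hsub _ hadd (mem_openSegment_sub_add x v)
  simpa using this.2

theorem eq_zero_of_mem_extremePoints_of_eventually_add_smul_mem {E : Type*} [AddCommGroup E]
    [Module ℝ E] {A : Set E} {x v : E} (hx : x ∈ A.extremePoints ℝ)
    (h : ∀ᶠ ε in 𝓝 (0 : ℝ), x + ε • v ∈ A) : v = 0 := by
  have hneg : ∀ᶠ ε in 𝓝 (0 : ℝ), x + (-ε) • v ∈ A :=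
    (continuous_neg.tendsto' (0 : ℝ) 0 neg_zero).eventually h
  obtain ⟨ε, ⟨hadd, hsub⟩, hε⟩ :=
    (((h.and hneg).filter_mono nhdsWithin_le_nhds).and
      (self_mem_nhdsWithin (s := {0}ᶜ))).exists
  have hεv : ε • v = 0 := eq_zero_of_add_mem_of_sub_mem_of_mem_extremePoints hx hadd
    (by simpa [sub_eq_add_neg] using hsub)
  exact (smul_eq_zero.1 hεv).resolve_left hε

theorem eventually_forall_add_mul_mem_Icc {ι : Type*} [Finite ι] {x z : ι → ℝ}
    (hx : ∀ i, x i ∈ Set.Icc 0 1) (hz : ∀ i, z i ≠ 0 → x i ∈ Set.Ioo 0 1) :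
    ∀ᶠ ε in 𝓝 (0 : ℝ), ∀ i, x i + ε * z i ∈ Set.Icc 0 1 := by
  refine eventually_all.2 fun i => ?_
  by_cases hzi : z i = 0
  · simp [hzi, hx i]
  · have hcont : Continuous fun ε : ℝ => x i + ε * z i := by fun_prop
    have hmem : ∀ᶠ ε in 𝓝 (0 : ℝ), x i + ε * z i ∈ Set.Ioo 0 1 :=
      hcont.continuousAt.eventually_mem (isOpen_Ioo.mem_nhds (by simpa using hz i hzi))
    exact hmem.mono fun _ h => Set.Ioo_subset_Icc_self h

namespace Rightsizing

variable {U B : Type} [Fintype U] [Fintype B] {D : ℕ}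
  (T : ℕ) (cap : B → Fin D → ℝ) (dem : U → Fin D → ℝ) (s e : U → ℕ)

def activeTasks (t : ℕ) : Finset U :=
  univ.filter fun u => s u ≤ t ∧ t ≤ e u

def polytope : Set ((U → B → ℝ) × (B → ℝ)) :=
  {p | (∀ u, ∑ b, p.1 u b = 1) ∧
    (∀ b, ∀ t ∈ Icc 1 T, ∀ d, ∑ u ∈ activeTasks s e t, p.1 u b * (dem u d / cap b d) ≤ p.2 b) ∧
    (∀ u b, p.1 u b ∈ Set.Icc 0 1)}

noncomputable def constraintMap : (U × B → ℝ) →ₗ[ℝ] (U ⊕ B × Icc 1 T × Fin D → ℝ) :=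
  LinearMap.pi fun
    | .inl u => ∑ b, LinearMap.proj (u, b)
    | .inr (b, t, d) =>
        ∑ u ∈ activeTasks s e t, (dem u d / cap b d) • LinearMap.proj (u, b)

variable {T cap dem s e}

theorem add_smul_mem_polytope {x : U → B → ℝ} {α : B → ℝ} {z : U × B → ℝ} {ε : ℝ}
    (hp : (x, α) ∈ polytope T cap dem s e) (hz : constraintMap T cap dem s e z = 0)
    (hbox : ∀ u b, x u b + ε * z (u, b) ∈ Set.Icc 0 1) :
    (x, α) + ε • (Function.curry z, 0) ∈ polytope T cap dem s e := by
  obtain ⟨hsum, hload, -⟩ := hp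
  have hzsum (u : U) : ∑ b, z (u, b) = 0 := by
    simpa [constraintMap] using congrFun hz (.inl u)
  have hzload (b : B) (t : ℕ) (ht : t ∈ Icc 1 T) (d : Fin D) :
      ∑ u ∈ activeTasks s e t, z (u, b) * (dem u d / cap b d) = 0 := by
    simpa [constraintMap, mul_comm] using congrFun hz (.inr (b, ⟨t, ht⟩, d))
  refine ⟨fun u => ?_, fun b t ht d => ?_, hbox⟩
  · simp [sum_add_distrib, ← mul_sum, hsum u, hzsum u]
  · simpa [add_mul, sum_add_distrib, mul_assoc, ← mul_sum, hzload b t ht d] using hload b t ht d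

theorem eq_zero_of_constraintMap_eq_zero {x : U → B → ℝ} {α : B → ℝ} {z : U × B → ℝ}
    (hext : (x, α) ∈ (polytope T cap dem s e).extremePoints ℝ)
    (hz : constraintMap T cap dem s e z = 0) (hsupp : ∀ p, z p ≠ 0 → x p.1 p.2 ∈ Set.Ioo 0 1) :
    z = 0 := by
  have hbox := eventually_forall_add_mul_mem_Icc (x := fun p : U × B => x p.1 p.2)
    (fun p => hext.1.2.2 p.1 p.2) hsupp
  have hv := eq_zero_of_mem_extremePoints_of_eventually_add_smul_mem hext
    (hbox.mono fun _ hε => add_smul_mem_polytope hext.1 hz fun u b => hε (u, b))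
  funext p
  exact congrFun (congrFun (congrArg Prod.fst hv) p.1) p.2

theorem ncard_fractional_le_of_mem_extremePoints {x : U → B → ℝ} {α : B → ℝ}
    (hext : (x, α) ∈ (polytope T cap dem s e).extremePoints ℝ) :
    {p : U × B | x p.1 p.2 ∈ Set.Ioo 0 1}.ncard ≤ Fintype.card U + Fintype.card B * T * D := by
  classical
  set S := {p : U × B | x p.1 p.2 ∈ Set.Ioo 0 1}
  let Φ := constraintMap T cap dem s e ∘ₗ Function.ExtendByZero.linearMap ℝ (Subtype.val : S → _)
  have hΦ : Function.Injective Φ := by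
    refine (injective_iff_map_eq_zero Φ).2 fun y hy => ?_
    have hz := eq_zero_of_constraintMap_eq_zero hext hy fun p hp => by
      by_contra hpS
      exact hp (Function.extend_apply' _ _ _ fun ⟨a, ha⟩ => hpS (ha ▸ a.2))
    funext i
    simpa [Subtype.val_injective.extend_apply] using congrFun hz i
  calc S.ncard = Module.finrank ℝ (S → ℝ) := by
        rw [Module.finrank_fintype_fun_eq_card, ← Nat.card_eq_fintype_card, Nat.card_coe_set_eq]
    _ ≤ Module.finrank ℝ (U ⊕ B × Icc 1 T × Fin D → ℝ) :=
        LinearMap.finrank_le_finrank_of_injective hΦ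
    _ = Fintype.card U + Fintype.card B * T * D := by simp [mul_assoc]

end Rightsizing

theorem stmt15_general
    (T D : ℕ)
    (U Btype : Type) [Fintype U] [Fintype Btype]
    (cap : Btype → Fin D → ℝ)
    (dem : U → Fin D → ℝ) (s e : U → ℕ)
    (P : Set ((U → Btype → ℝ) × (Btype → ℝ)))
    (hP : P = {p | (∀ u, ∑ B : Btype, p.1 u B = 1) ∧
        (∀ (B : Btype) (t : ℕ), t ∈ Finset.Icc 1 T → ∀ d : Fin D,
          ∑ u ∈ Finset.univ.filter (fun u => s u ≤ t ∧ t ≤ e u),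
            p.1 u B * (dem u d / cap B d) ≤ p.2 B) ∧
        (∀ u B, 0 ≤ p.1 u B ∧ p.1 u B ≤ 1)})
    (x : U → Btype → ℝ) (α : Btype → ℝ)
    (hext : (x, α) ∈ Set.extremePoints ℝ P) :
    {p : U × Btype | 0 < x p.1 p.2 ∧ x p.1 p.2 < 1}.ncard
      ≤ Fintype.card U + Fintype.card Btype * T * D := by
  subst hP
  exact Rightsizing.ncard_fractional_le_of_mem_extremePoints hext

theorem stmt15
    (T D : ℕ)
    (U Btype : Type) [Fintype U] [Fintype Btype]
    (cost : Btype → ℝ) (cap : Btype → Fin D → ℝ)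
    (dem : U → Fin D → ℝ) (s e : U → ℕ)
    (hcost : ∀ B, 0 < cost B)
    (hcap : ∀ B d, 0 < cap B d)
    (hdem : ∀ u d, 0 ≤ dem u d)
    (hspan : ∀ u, 1 ≤ s u ∧ s u ≤ e u ∧ e u ≤ T)
    (P : Set ((U → Btype → ℝ) × (Btype → ℝ)))
    (hP : P = {p | (∀ u, ∑ B : Btype, p.1 u B = 1) ∧
        (∀ (B : Btype) (t : ℕ), t ∈ Finset.Icc 1 T → ∀ d : Fin D,
          ∑ u ∈ Finset.univ.filter (fun u => s u ≤ t ∧ t ≤ e u),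
            p.1 u B * (dem u d / cap B d) ≤ p.2 B) ∧
        (∀ u B, 0 ≤ p.1 u B ∧ p.1 u B ≤ 1)})
    (x : U → Btype → ℝ) (α : Btype → ℝ)
    (hext : (x, α) ∈ Set.extremePoints ℝ P) :
    {p : U × Btype | 0 < x p.1 p.2 ∧ x p.1 p.2 < 1}.ncard
      ≤ Fintype.card U + Fintype.card Btype * T * D :=
  stmt15_general T D U Btype cap dem s e P hP x α hext
end

section
/- Consider a general mapping version of Lemma 2: let π : 𝓤 → 𝓑 be any mapping of tasks to node-types in a TL-RIGHTSIZE instance in which every task is small, and let V_B = {u : π(u) = B}. Then there exists a feasible solution S that places every task u on a node of type π(u) and satisfies cost(S) ≤ Σ_{B∈𝓑} cost(B) + 2D · Σ_{B∈𝓑} cost(B) · max_{1≤t≤T} Σ_{u∈V_B, u∼t} h_avg(u|B). -/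
/-
First-Fit in order of start times. Tasks are processed by increasing `s`, and each task `u` goes
to the lowest-indexed node of type `π u` on which it fits throughout its span. If `u` lands on
node `j`, every node `j' < j` of that type overflowed for `u` at some time `t ≥ s u` in some
dimension `d`. Every task already on `j'` started no later than `s u` and is still running at `t`,
so it is running at `s u` as well; since `u` is small, node `j'` is more than half full in
dimension `d` at time `s u`, and hence carries total `h_avg` at least `1 / (2D)` at that time.
Summing over `j' < j` gives `j ≤ 2D · Σ_{v ∈ V_B, v ∼ s u} h_avg(v|B)`, so there are at most
`1 + 2D · max_t Σ_{v ∈ V_B, v ∼ t} h_avg(v|B)` nodes of type `B`.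
-/

open Finset

namespace TLRightsize

variable {U β : Type*}

section FirstFit

variable {ι : Type*} [DecidableEq β] (cap : β → ι → ℝ) (dem : U → ι → ℝ) (s e : U → ℕ)
  (π : U → β)

/-- Nodes are indexed by pairs `(b, j)`, the `j`-th node of type `b`; an index map `A : U → ℕ`
puts task `u` on node `(π u, A u)`. -/
def load (X : Finset U) (A : U → ℕ) (b : β) (j t : ℕ) (d : ι) : ℝ :=
  ∑ v ∈ X with (π v = b ∧ s v ≤ t ∧ t ≤ e v) ∧ A v = j, dem v d

def IsFirstFitPacking (X : Finset U) (A : U → ℕ) : Prop :=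
  (∀ b j t d, load dem s e π X A b j t d ≤ cap b d) ∧
    ∀ u ∈ X, ∀ j < A u, ∃ d, cap (π u) d / 2 < load dem s e π X A (π u) j (s u) d

variable {cap dem s e π}

theorem load_insert_update [DecidableEq U] {X : Finset U} {u : U} (hu : u ∉ X) (A : U → ℕ)
    (i : ℕ) (b : β) (j t : ℕ) (d : ι) :
    load dem s e π (insert u X) (Function.update A u i) b j t d =
      load dem s e π X A b j t d +
        if (π u = b ∧ s u ≤ t ∧ t ≤ e u) ∧ i = j then dem u d else 0 := by
  have hX : {v ∈ X | (π v = b ∧ s v ≤ t ∧ t ≤ e v) ∧ Function.update A u i v = j} =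
      {v ∈ X | (π v = b ∧ s v ≤ t ∧ t ≤ e v) ∧ A v = j} :=
    filter_congr fun v hv => by rw [Function.update_of_ne (ne_of_mem_of_not_mem hv hu)]
  unfold load
  rw [filter_insert, Function.update_self, hX]
  split_ifs
  · rw [sum_insert fun h => hu (mem_filter.1 h).1, add_comm]
  · rw [add_zero]

theorem load_le_load_insert_update [DecidableEq U] (hdem : ∀ u d, 0 ≤ dem u d) {X : Finset U}
    {u : U} (hu : u ∉ X) (A : U → ℕ) (i : ℕ) (b : β) (j t : ℕ) (d : ι) :
    load dem s e π X A b j t d ≤ load dem s e π (insert u X) (Function.update A u i) b j t d := by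
  rw [load_insert_update hu]
  exact le_add_of_nonneg_right (by split_ifs <;> simp [hdem])

theorem load_le_load_of_forall_start_le (hdem : ∀ u d, 0 ≤ dem u d) {X : Finset U} {t₀ t : ℕ}
    (hX : ∀ v ∈ X, s v ≤ t₀) (ht : t₀ ≤ t) (A : U → ℕ) (b : β) (j : ℕ) (d : ι) :
    load dem s e π X A b j t d ≤ load dem s e π X A b j t₀ d := by
  refine sum_le_sum_of_subset_of_nonneg (fun v hv => ?_) fun v _ _ => hdem v d
  simp only [mem_filter] at hv ⊢
  exact ⟨hv.1, ⟨hv.2.1.1, hX v hv.1, by omega⟩, hv.2.2⟩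

theorem load_eq_zero_of_sup_lt (X : Finset U) (A : U → ℕ) (b : β) {j : ℕ} (hj : X.sup A < j)
    (t : ℕ) (d : ι) : load dem s e π X A b j t d = 0 :=
  sum_eq_zero fun v hv => by
    have := le_sup (f := A) (mem_filter.1 hv).1
    have := (mem_filter.1 hv).2.2
    omega

theorem IsFirstFitPacking.insert [DecidableEq U] (hdem : ∀ u d, 0 ≤ dem u d)
    (hsmall : ∀ u d, dem u d ≤ cap (π u) d / 2) {X : Finset U} {A : U → ℕ} {u : U}
    (hA : IsFirstFitPacking cap dem s e π X A) (hu : u ∉ X) (hlast : ∀ v ∈ X, s v ≤ s u) :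
    ∃ A', IsFirstFitPacking cap dem s e π (insert u X) A' := by
  classical
  let Fits (j : ℕ) : Prop :=
    ∀ t, s u ≤ t → t ≤ e u → ∀ d, load dem s e π X A (π u) j t d + dem u d ≤ cap (π u) d
  have hfresh : Fits (X.sup A + 1) := fun t _ _ d => by
    rw [load_eq_zero_of_sup_lt X A _ (Nat.lt_succ_self _), zero_add]
    linarith [hsmall u d, hdem u d]
  have hex : ∃ j, Fits j := ⟨_, hfresh⟩
  refine ⟨Function.update A u (Nat.find hex), fun b j t d => ?_, fun v hv j hj => ?_⟩
  · rw [load_insert_update hu]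
    split_ifs with h
    · obtain ⟨⟨rfl, h₁, h₂⟩, rfl⟩ := h
      exact Nat.find_spec hex t h₁ h₂ d
    · simpa using hA.1 b j t d
  rcases mem_insert.1 hv with rfl | hvX
  · rw [Function.update_self] at hj
    have hfail : ¬ Fits j := Nat.find_min hex hj
    simp only [Fits, not_forall, not_le] at hfail
    obtain ⟨t, h₁, _, d, hd⟩ := hfail
    refine ⟨d, ?_⟩
    calc cap (π v) d / 2 < load dem s e π X A (π v) j t d := by linarith [hsmall v d]
      _ ≤ load dem s e π X A (π v) j (s v) d := load_le_load_of_forall_start_le hdem hlast h₁ ..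
      _ ≤ _ := load_le_load_insert_update hdem hu ..
  · rw [Function.update_of_ne (ne_of_mem_of_not_mem hvX hu)] at hj
    obtain ⟨d, hd⟩ := hA.2 v hvX j hj
    exact ⟨d, hd.trans_le (load_le_load_insert_update hdem hu ..)⟩

theorem exists_isFirstFitPacking [DecidableEq U] (s e : U → ℕ) (π : U → β)
    (hcap : ∀ b d, 0 ≤ cap b d) (hdem : ∀ u d, 0 ≤ dem u d)
    (hsmall : ∀ u d, dem u d ≤ cap (π u) d / 2) (X : Finset U) :
    ∃ A, IsFirstFitPacking cap dem s e π X A := by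
  induction X using Finset.induction_on_max_value s with
  | empty =>
    exact ⟨0, fun b j t d => by simp [load, hcap], fun u hu => absurd hu (notMem_empty u)⟩
  | insert u X hu hlast ih =>
    obtain ⟨A, hA⟩ := ih
    exact hA.insert hdem hsmall hu hlast

end FirstFit

section Counting

variable {D : ℕ}

noncomputable def hAvg (a c : Fin D → ℝ) : ℝ := (D : ℝ)⁻¹ * ∑ d, a d / c d

theorem one_le_two_mul_sum_hAvg {S : Finset U} {a : U → Fin D → ℝ} {c : Fin D → ℝ}
    (ha : ∀ u d, 0 ≤ a u d) (hc : ∀ d, 0 < c d) {d : Fin D} (h : c d / 2 < ∑ u ∈ S, a u d) :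
    1 ≤ 2 * D * ∑ u ∈ S, hAvg (a u) c := by
  have hD : (D : ℝ) ≠ 0 := by exact_mod_cast d.pos.ne'
  calc (1 : ℝ)
    _ ≤ 2 * ∑ u ∈ S, a u d / c d := by
      rw [← sum_div, mul_div_assoc', le_div_iff₀ (hc d)]
      linarith
    _ ≤ 2 * ∑ u ∈ S, ∑ d', a u d' / c d' := by
      gcongr with u
      exact single_le_sum (fun d' _ => div_nonneg (ha u d') (hc d').le) (mem_univ d)
    _ = 2 * D * ∑ u ∈ S, hAvg (a u) c := by
      simp only [hAvg, ← mul_sum]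
      field_simp

variable [Fintype U] [DecidableEq β] (cap : β → Fin D → ℝ) (dem : U → Fin D → ℝ) (s e : U → ℕ)
  (π : U → β)

noncomputable def typeLoad (b : β) (t : ℕ) : ℝ :=
  ∑ u with π u = b ∧ s u ≤ t ∧ t ≤ e u, hAvg (dem u) (cap b)

variable {cap dem s e π}

theorem typeLoad_nonneg (hcap : ∀ b d, 0 < cap b d) (hdem : ∀ u d, 0 ≤ dem u d) (b : β)
    (t : ℕ) : 0 ≤ typeLoad cap dem s e π b t :=
  sum_nonneg fun u _ => mul_nonneg (by positivity)
    (sum_nonneg fun d _ => div_nonneg (hdem u d) (hcap b d).le)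

theorem IsFirstFitPacking.index_le (hcap : ∀ b d, 0 < cap b d) (hdem : ∀ u d, 0 ≤ dem u d)
    {A : U → ℕ} (hA : IsFirstFitPacking cap dem s e π univ A) (u : U) :
    (A u : ℝ) ≤ 2 * D * typeLoad cap dem s e π (π u) (s u) := by
  set S : Finset U := {v | π v = π u ∧ s v ≤ s u ∧ s u ≤ e v}
  have hnode : ∀ j ∈ range (A u), 1 ≤ 2 * D * ∑ v ∈ S with A v = j, hAvg (dem v) (cap (π u)) := by
    intro j hj
    obtain ⟨d, hd⟩ := hA.2 u (mem_univ u) j (mem_range.1 hj)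
    rw [load, ← filter_filter] at hd
    exact one_le_two_mul_sum_hAvg hdem (hcap _) hd
  calc (A u : ℝ) = ∑ j ∈ range (A u), 1 := by simp
    _ ≤ ∑ j ∈ range (A u), 2 * D * ∑ v ∈ S with A v = j, hAvg (dem v) (cap (π u)) :=
      sum_le_sum hnode
    _ ≤ 2 * D * typeLoad cap dem s e π (π u) (s u) := by
      rw [← mul_sum]
      gcongr
      refine sum_fiberwise_le_sum_of_sum_fiber_nonneg fun j _ => sum_nonneg fun v _ => ?_
      exact mul_nonneg (by positivity)
        (sum_nonneg fun d _ => div_nonneg (hdem v d) (hcap _ d).le)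

end Counting

theorem sigma_mk_eq_iff {n : β → ℕ} {b : β} {j : Fin (n b)} {p : Σ b, Fin (n b)} :
    (⟨b, j⟩ : Σ b, Fin (n b)) = p ↔ b = p.1 ∧ (j : ℕ) = p.2 := by
  obtain ⟨b', j'⟩ := p
  rw [Sigma.mk.inj_iff]
  exact and_congr_right fun h => Fin.heq_ext_iff (congrArg n h)

section Nodes

variable [Fintype U] [DecidableEq β] (π : U → β)

def nodeCount (A : U → ℕ) (b : β) : ℕ := ({u | π u = b} : Finset U).sup (A · + 1)

variable {π}

theorem lt_nodeCount (A : U → ℕ) (u : U) : A u < nodeCount π A (π u) :=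
  Nat.lt_of_succ_le (le_sup (f := (A · + 1)) (by simp))

theorem exists_fin_nodes [Fintype β] (A : U → ℕ) (cost : β → ℝ) :
    ∃ (k : ℕ) (ty : Fin k → β) (idx : Fin k → ℕ) (assign : U → Fin k),
      (∀ u bn, assign u = bn ↔ π u = ty bn ∧ A u = idx bn) ∧
        ∑ bn, cost (ty bn) = ∑ b, nodeCount π A b * cost b := by
  let eqv := Fintype.equivFin (Σ b, Fin (nodeCount π A b))
  refine ⟨_, fun bn => (eqv.symm bn).1, fun bn => (eqv.symm bn).2,
    fun u => eqv ⟨π u, A u, lt_nodeCount A u⟩, fun u bn => ?_, ?_⟩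
  · rw [← Equiv.eq_symm_apply, sigma_mk_eq_iff]
  · rw [Equiv.sum_comp eqv.symm (fun p => cost p.1), Fintype.sum_sigma]
    simp

variable {D : ℕ} {cap : β → Fin D → ℝ} {dem : U → Fin D → ℝ} {s e : U → ℕ}

theorem IsFirstFitPacking.nodeCount_le (hcap : ∀ b d, 0 < cap b d) (hdem : ∀ u d, 0 ≤ dem u d)
    {A : U → ℕ} (hA : IsFirstFitPacking cap dem s e π univ A) {ts : Finset ℕ}
    (hts : ts.Nonempty) (hs : ∀ u, s u ∈ ts) (b : β) :
    (nodeCount π A b : ℝ) ≤ 1 + 2 * D * ts.sup' hts (typeLoad cap dem s e π b) := by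
  refine sup_induction (p := fun m : ℕ => (m : ℝ) ≤ _) ?_ ?_ fun u hu => ?_
  · obtain ⟨t, ht⟩ := id hts
    have : 0 ≤ ts.sup' hts (typeLoad cap dem s e π b) :=
      (typeLoad_nonneg hcap hdem b t).trans (le_sup' _ ht)
    simp only [bot_eq_zero', CharP.cast_eq_zero]
    positivity
  · intro m₁ h₁ m₂ h₂
    simpa only [Nat.cast_max] using max_le h₁ h₂
  · obtain rfl : π u = b := by simpa using hu
    have := (hA.index_le hcap hdem u).trans
      (mul_le_mul_of_nonneg_left (le_sup' _ (hs u)) (by positivity))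
    push_cast
    linarith

end Nodes

end TLRightsize

open TLRightsize

theorem stmt17_general
    (T D : ℕ) (hT : 1 ≤ T)
    (U Btype : Type) [Fintype U] [Fintype Btype] [DecidableEq Btype]
    (cost : Btype → ℝ) (cap : Btype → Fin D → ℝ)
    (dem : U → Fin D → ℝ) (s e : U → ℕ)
    (hcost : ∀ B, 0 < cost B)
    (hcap : ∀ B d, 0 < cap B d)
    (hdem : ∀ u d, 0 ≤ dem u d)
    (hspan : ∀ u, 1 ≤ s u ∧ s u ≤ e u ∧ e u ≤ T)
    (hsmall : ∀ u B d, dem u d ≤ cap B d / 2)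
    (π : U → Btype) :
    ∃ (k : ℕ) (ty : Fin k → Btype) (assign : U → Fin k),
      (∀ u, ty (assign u) = π u) ∧
      (∀ (bn : Fin k) (t : ℕ), t ∈ Finset.Icc 1 T → ∀ d : Fin D,
        ∑ u ∈ Finset.univ.filter (fun u => assign u = bn ∧ s u ≤ t ∧ t ≤ e u), dem u d
          ≤ cap (ty bn) d) ∧
      ∑ bn : Fin k, cost (ty bn)
        ≤ (∑ B : Btype, cost B) + 2 * D *
          ∑ B : Btype, cost B *
            (Finset.Icc 1 T).sup' (Finset.nonempty_Icc.mpr hT)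
              (fun t => ∑ u ∈ Finset.univ.filter (fun u => π u = B ∧ s u ≤ t ∧ t ≤ e u),
                (D : ℝ)⁻¹ * ∑ d, dem u d / cap B d) := by
  have := Classical.decEq U
  obtain ⟨A, hA⟩ := exists_isFirstFitPacking s e π (fun B d => (hcap B d).le) hdem
    (fun u => hsmall u (π u)) univ
  obtain ⟨k, ty, idx, assign, hassign, hcostsum⟩ := exists_fin_nodes A cost
  refine ⟨k, ty, assign, fun u => ((hassign u _).1 rfl).1.symm, fun bn t _ d => ?_, ?_⟩
  · calc _ = load dem s e π univ A (ty bn) (idx bn) t d := by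
          unfold load
          congr 1
          ext u
          simp only [mem_filter, hassign]
          tauto
      _ ≤ cap (ty bn) d := hA.1 _ _ t d
  · have hs : ∀ u, s u ∈ Icc 1 T := fun u =>
      mem_Icc.2 ⟨(hspan u).1, (hspan u).2.1.trans (hspan u).2.2⟩
    rw [hcostsum, mul_sum, ← sum_add_distrib]
    refine sum_le_sum fun B _ => ?_
    refine (mul_le_mul_of_nonneg_right (hA.nodeCount_le hcap hdem (nonempty_Icc.mpr hT) hs B)
      (hcost B).le).trans_eq ?_
    unfold typeLoad hAvg
    ring

theorem stmt17
    (T D : ℕ) (hT : 1 ≤ T) (hD : 0 < D)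
    (U Btype : Type) [Fintype U] [Fintype Btype] [DecidableEq Btype]
    (cost : Btype → ℝ) (cap : Btype → Fin D → ℝ)
    (dem : U → Fin D → ℝ) (s e : U → ℕ)
    (hcost : ∀ B, 0 < cost B)
    (hcap : ∀ B d, 0 < cap B d)
    (hdem : ∀ u d, 0 ≤ dem u d)
    (hspan : ∀ u, 1 ≤ s u ∧ s u ≤ e u ∧ e u ≤ T)
    (hsmall : ∀ u B d, dem u d ≤ cap B d / 2)
    (π : U → Btype) :
    ∃ (k : ℕ) (ty : Fin k → Btype) (assign : U → Fin k),
      (∀ u, ty (assign u) = π u) ∧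
      (∀ (bn : Fin k) (t : ℕ), t ∈ Finset.Icc 1 T → ∀ d : Fin D,
        ∑ u ∈ Finset.univ.filter (fun u => assign u = bn ∧ s u ≤ t ∧ t ≤ e u), dem u d
          ≤ cap (ty bn) d) ∧
      ∑ bn : Fin k, cost (ty bn)
        ≤ (∑ B : Btype, cost B) + 2 * D *
          ∑ B : Btype, cost B *
            (Finset.Icc 1 T).sup' (Finset.nonempty_Icc.mpr hT)
              (fun t => ∑ u ∈ Finset.univ.filter (fun u => π u = B ∧ s u ≤ t ∧ t ≤ e u),
                (D : ℝ)⁻¹ * ∑ d, dem u d / cap B d) :=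
  stmt17_general T D hT U Btype cost cap dem s e hcost hcap hdem hspan hsmall π
end
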